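/- arXiv:0805.1683 — 2 statements merged into one kernel-verified Lean document; each statement's English description precedes it below -/
import Mathlib

section
/- On the hexagonal-support configuration, the function taking alternating values ±1 on the six vertices of a hexagonal face and 0 elsewhere is a finitely supported eigenfunction of the combinatorial Laplacian with eigenvalue 3/2, in any graph where the six hexagon vertices each have degree 4 and consecutive hexagon vertices are adjacent while non-consecutive ones are not, and each hexagon vertex has exactly two neighbors outside the hexagon. -/
/-- The combinatorial Laplacian `(Δ̃f)(v) = f(v) - (1/deg v) ∑_{u ∼ v} f(u)`. -/
noncomputable def combLap {V : Type} (G : SimpleGraph V) [∀ v, Fintype (G.neighborSet v)]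
    (f : V → ℝ) (v : V) : ℝ :=
  f v - (1 / (G.degree v : ℝ)) * ∑ u ∈ G.neighborFinset v, f u

/-- Let `G` contain a 6-cycle `v 0, …, v 5` of vertices of degree `4` whose only
neighbors on the cycle are their cyclic successors and predecessors, and such that
every vertex outside the cycle which is adjacent to the cycle has exactly two cycle
neighbors, with consecutive indices. Then the function taking alternating values
`±1` on the cycle and `0` elsewhere is a finitely supported eigenfunction of the
combinatorial Laplacian with eigenvalue `3/2`. -/
theorem hexagon_eigenfunction (V : Type) (G : SimpleGraph V)
    [∀ x, Fintype (G.neighborSet x)] (v : Fin 6 → V) (hinj : Function.Injective v)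
    (hcyc : ∀ i : Fin 6, G.Adj (v i) (v (i + 1)))
    (hdeg : ∀ i : Fin 6, G.degree (v i) = 4)
    (honly : ∀ i j : Fin 6, G.Adj (v i) (v j) → j = i + 1 ∨ j = i - 1)
    (hout : ∀ w, w ∉ Set.range v → (∃ i : Fin 6, G.Adj w (v i)) →
      ∃ i : Fin 6, {j : Fin 6 | G.Adj w (v j)} = {i, i + 1})
    (f : V → ℝ)
    (hf : ∀ i : Fin 6, f (v i) = (-1 : ℝ) ^ (i : ℕ))
    (hf0 : ∀ w, w ∉ Set.range v → f w = 0) :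
    ∀ x : V, combLap G f x = (3 / 2) * f x := by
  classical

  have key : ∀ x : V, ∑ u ∈ G.neighborFinset x, f u
      = ∑ j ∈ Finset.univ.filter (fun j : Fin 6 => G.Adj x (v j)), f (v j) := by
    intro x
    rw [← Finset.sum_filter_add_sum_filter_not (G.neighborFinset x) (· ∈ Set.range v)]
    have h2 : ∑ u ∈ (G.neighborFinset x).filter (fun u => ¬ u ∈ Set.range v), f u = 0 :=
      Finset.sum_eq_zero (fun u hu => hf0 u (Finset.mem_filter.mp hu).2)
    rw [h2, add_zero]
    have him : (G.neighborFinset x).filter (· ∈ Set.range v)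
        = (Finset.univ.filter (fun j : Fin 6 => G.Adj x (v j))).image v := by
      ext u
      simp only [Finset.mem_filter, Finset.mem_image, Finset.mem_univ, true_and,
        SimpleGraph.mem_neighborFinset, Set.mem_range]
      constructor
      · rintro ⟨hadj, j, rfl⟩; exact ⟨j, hadj, rfl⟩
      · rintro ⟨j, hadj, rfl⟩; exact ⟨hadj, j, rfl⟩
    rw [him, Finset.sum_image (fun a _ b _ h => hinj h)]
  intro x
  by_cases hx : x ∈ Set.range v
  · obtain ⟨i, rfl⟩ := hx
    have hS : Finset.univ.filter (fun j : Fin 6 => G.Adj (v i) (v j)) = {i - 1, i + 1} := by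
      ext j
      simp only [Finset.mem_filter, Finset.mem_univ, true_and, Finset.mem_insert,
        Finset.mem_singleton]
      constructor
      · intro h; rcases honly i j h with h | h
        · exact Or.inr h
        · exact Or.inl h
      · rintro (rfl | rfl)
        · have := (hcyc (i - 1)).symm
          rwa [sub_add_cancel] at this
        · exact hcyc i
    have hne : i - 1 ≠ i + 1 := by omega
    rw [combLap, key, hS, Finset.sum_pair hne, hdeg]; simp only [hf]
    have : ((-1 : ℝ)) ^ ((i - 1 : Fin 6) : ℕ) + (-1) ^ ((i + 1 : Fin 6) : ℕ)
        = -2 * (-1) ^ (i : ℕ) := by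
      fin_cases i <;> norm_num [Fin.add_def, Fin.sub_def]
    rw [this]; ring
  · have hfx : f x = 0 := hf0 x hx
    rw [combLap, key, hfx]
    by_cases hadj : ∃ i : Fin 6, G.Adj x (v i)
    · obtain ⟨i, hi⟩ := hout x hx hadj
      have hS : Finset.univ.filter (fun j : Fin 6 => G.Adj x (v j)) = {i, i + 1} := by
        ext j
        have := Set.ext_iff.mp hi j
        simp only [Set.mem_setOf_eq, Set.mem_insert_iff, Set.mem_singleton_iff] at this
        simp only [Finset.mem_filter, Finset.mem_univ, true_and, Finset.mem_insert,
          Finset.mem_singleton]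
        exact this
      have hne : i ≠ i + 1 := by omega
      rw [hS, Finset.sum_pair hne]; simp only [hf]
      have : ((-1 : ℝ)) ^ (i : ℕ) + (-1) ^ ((i + 1 : Fin 6) : ℕ) = 0 := by
        fin_cases i <;> norm_num [Fin.add_def, Fin.sub_def]
      rw [this]; ring
    · have hS : Finset.univ.filter (fun j : Fin 6 => G.Adj x (v j)) = ∅ := by
        ext j
        simp only [Finset.mem_filter, Finset.mem_univ, true_and, Finset.notMem_empty,
          iff_false]
        exact fun h => hadj ⟨j, h⟩
      rw [hS, Finset.sum_empty]; ring
end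

section
/- Let h(G) = inf_W |∂_V W|/|W| over finite nonempty W, where ∂_V W is the vertex boundary. If the vertex degrees are uniformly bounded, sphere sizes s_n are non-decreasing, and μ(G) = limsup_n (log s_n)/n, then e^{μ(G)} ≥ 1 + h(G). -/
open Filter SimpleGraph Real

/-- Let `G` be an infinite connected graph of uniformly bounded degree with
non-decreasing sphere sizes `s n`, exponential growth
`μ(G) = limsup (log s_n)/n`, and vertex-boundary Cheeger constant
`h(G) = inf |∂_V W|/|W|`. Then `e^{μ(G)} ≥ 1 + h(G)`. -/
theorem exp_growth_ge_one_add_cheeger (V : Type) [Infinite V] (G : SimpleGraph V)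
    [∀ w, Fintype (G.neighborSet w)] (hconn : G.Connected)
    (D : ℕ) (hdeg : ∀ w, G.degree w ≤ D) (v : V)
    (hmono : Monotone fun n : ℕ => Nat.card {w : V // G.dist v w = n}) :
    Real.exp (Filter.limsup
        (fun n : ℕ => Real.log (Nat.card {w : V // G.dist v w = n} : ℝ) / n)
        Filter.atTop) ≥
      1 + sInf {r : ℝ | ∃ W : Finset V, W.Nonempty ∧
        r = (Nat.card {u : V // u ∉ W ∧ ∃ w ∈ W, G.Adj u w} : ℝ) / (W.card : ℝ)} := by
  classical
  set s : ℕ → ℕ := fun n => Nat.card {w : V // G.dist v w = n} with hs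
  set S : Set ℝ := {r : ℝ | ∃ W : Finset V, W.Nonempty ∧
      r = (Nat.card {u : V // u ∉ W ∧ ∃ w ∈ W, G.Adj u w} : ℝ) / (W.card : ℝ)} with hSdef
  -- sphere of radius 0 is {v}
  have hsphere0 : {w : V | G.dist v w = 0} = {v} := by
    ext w
    simp only [Set.mem_setOf_eq, Set.mem_singleton_iff]
    exact (hconn v w).dist_eq_zero_iff.trans eq_comm
  have hscard : ∀ n, s n = ({w : V | G.dist v w = n} : Set V).ncard := by
    intro n; exact Nat.card_coe_set_eq _
  have hs0 : s 0 = 1 := by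
    rw [hscard 0, hsphere0, Set.ncard_singleton]
  have hs1 : ∀ n, 1 ≤ s n := fun n => hs0 ▸ hmono (Nat.zero_le n)
  have hfin : ∀ n, {w : V | G.dist v w = n}.Finite := by
    intro n
    have h1 : 0 < Nat.card {w : V // G.dist v w = n} := hs1 n
    rw [Nat.card_pos_iff] at h1
    exact Set.finite_coe_iff.mp h1.2
  have hsplit : ∀ n : ℕ, {w : V | G.dist v w ≤ n + 1}
      = {w : V | G.dist v w ≤ n} ∪ {w : V | G.dist v w = n + 1} := by
    intro n; ext w; simp only [Set.mem_union, Set.mem_setOf_eq]; omega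
  have hball0 : {w : V | G.dist v w ≤ 0} = {w : V | G.dist v w = 0} := by
    ext w; simp
  have hballfin : ∀ n : ℕ, {w : V | G.dist v w ≤ n}.Finite := by
    intro n
    induction n with
    | zero => rw [hball0]; exact hfin 0
    | succ n ih => rw [hsplit n]; exact ih.union (hfin (n + 1))
  set B : ℕ → Finset V := fun n => (hballfin n).toFinset with hB
  have hmemB : ∀ n (w : V), w ∈ B n ↔ G.dist v w ≤ n := by
    intro n w; simp [hB, Set.Finite.mem_toFinset]
  have hbcard : ∀ n, (B n).card = ({w : V | G.dist v w ≤ n} : Set V).ncard :=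
    fun n => (Set.ncard_eq_toFinset_card _ (hballfin n)).symm
  have hvB : ∀ n, v ∈ B n := by
    intro n; rw [hmemB, SimpleGraph.dist_self]; exact Nat.zero_le n
  have hBpos : ∀ n, 0 < (B n).card := fun n => Finset.card_pos.mpr ⟨v, hvB n⟩
  have hb0 : (B 0).card = 1 := by
    rw [hbcard, hball0, hsphere0, Set.ncard_singleton]
  -- ball cardinality recursion
  have hbsucc : ∀ n, (B (n + 1)).card = (B n).card + s (n + 1) := by
    intro n
    have hdisj : Disjoint {w : V | G.dist v w ≤ n} {w : V | G.dist v w = n + 1} := by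
      rw [Set.disjoint_left]; intro w hw hw'
      simp only [Set.mem_setOf_eq] at hw hw'; omega
    rw [hbcard, hbcard, hscard, hsplit n,
      Set.ncard_union_eq hdisj (hballfin n) (hfin (n + 1))]
  -- spheres are contained in balls
  have hsub_ball : ∀ n, s n ≤ (B n).card := by
    intro n
    rw [hscard, hbcard]
    exact Set.ncard_le_ncard (fun w hw => le_of_eq hw) (hballfin n)
  -- the Cheeger constant
  set h0 : ℝ := sInf S with hh0
  have hSnonneg : ∀ r ∈ S, (0:ℝ) ≤ r := by
    rintro r ⟨W, hW, rfl⟩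
    positivity
  have h0nonneg : 0 ≤ h0 := Real.sInf_nonneg hSnonneg
  -- vertex boundary of the ball is inside the next sphere
  have hbd : ∀ n, (Nat.card {u : V // u ∉ B n ∧ ∃ w ∈ B n, G.Adj u w} : ℝ) ≤ s (n + 1) := by
    intro n
    have hsub : {u : V | u ∉ B n ∧ ∃ w ∈ B n, G.Adj u w} ⊆
        {w : V | G.dist v w = n + 1} := by
      rintro u ⟨hu, w, hw, hadj⟩
      have h1 : G.dist v u ≤ n + 1 := by
        calc G.dist v u ≤ G.dist v w + G.dist w u := hconn.dist_triangle
          _ ≤ n + 1 := by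
            have hle : G.dist w u ≤ 1 := by
              have := SimpleGraph.dist_le hadj.symm.toWalk
              simpa using this
            have := (hmemB n w).mp hw
            omega
      have h2 : ¬ G.dist v u ≤ n := by rwa [hmemB] at hu
      simp only [Set.mem_setOf_eq]; omega
    have := Set.ncard_le_ncard hsub (hfin (n + 1))
    rw [hscard]
    exact_mod_cast (Nat.card_coe_set_eq _ ▸ this)
  -- h0 * |B n| ≤ s (n+1)
  have hkey : ∀ n, h0 * (B n).card ≤ (s (n + 1) : ℝ) := by
    intro n
    have hmem : ((Nat.card {u : V // u ∉ B n ∧ ∃ w ∈ B n, G.Adj u w} : ℝ) / ((B n).card : ℝ)) ∈ S :=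
      ⟨B n, ⟨v, hvB n⟩, rfl⟩
    have hle : h0 ≤ (Nat.card {u : V // u ∉ B n ∧ ∃ w ∈ B n, G.Adj u w} : ℝ) / ((B n).card : ℝ) :=
      csInf_le ⟨0, hSnonneg⟩ hmem
    have hpos : (0:ℝ) < ((B n).card : ℝ) := by exact_mod_cast hBpos n
    calc h0 * (B n).card
        ≤ ((Nat.card {u : V // u ∉ B n ∧ ∃ w ∈ B n, G.Adj u w} : ℝ) / ((B n).card : ℝ)) * (B n).card :=
          mul_le_mul_of_nonneg_right hle hpos.le
      _ = (Nat.card {u : V // u ∉ B n ∧ ∃ w ∈ B n, G.Adj u w} : ℝ) := by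
          field_simp
      _ ≤ s (n + 1) := hbd n
  -- geometric growth of balls
  have hgeom : ∀ n, (1 + h0) ^ n ≤ ((B n).card : ℝ) := by
    intro n
    induction n with
    | zero => simp [hb0]
    | succ n ih =>
      have : (1 + h0) ^ (n + 1) = (1 + h0) ^ n + h0 * (1 + h0) ^ n := by ring
      rw [this, hbsucc n, Nat.cast_add]
      gcongr
      calc h0 * (1 + h0) ^ n ≤ h0 * (B n).card := by
            apply mul_le_mul_of_nonneg_left ih h0nonneg
        _ ≤ (s (n + 1) : ℝ) := hkey n
  -- balls are bounded by (n+1) * s n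
  have hb_le : ∀ n, (B n).card ≤ (n + 1) * s n := by
    intro n
    induction n with
    | zero => rw [hb0, hs0]
    | succ n ih =>
      have hmle : s n ≤ s (n + 1) := hmono (Nat.le_succ n)
      calc (B (n + 1)).card = (B n).card + s (n + 1) := hbsucc n
        _ ≤ (n + 1) * s n + s (n + 1) := by omega
        _ ≤ (n + 1 + 1) * s (n + 1) := by nlinarith
  -- growth upper bound: s (n+1) ≤ D * |B n|, hence |B n| ≤ (D+1)^n
  have hup : ∀ n, s (n + 1) ≤ D * (B n).card := by
    intro n
    have hsubB : (hfin (n + 1)).toFinset ⊆ (B n).biUnion (fun w => G.neighborFinset w) := by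
      intro u hu
      rw [Set.Finite.mem_toFinset] at hu
      have hne : G.dist v u ≠ 0 := by simp only [Set.mem_setOf_eq] at hu; omega
      obtain ⟨p, hp⟩ := SimpleGraph.exists_walk_of_dist_ne_zero hne
      have hnotnil : ¬ p.reverse.Nil := by
        rw [SimpleGraph.Walk.nil_iff_length_eq, SimpleGraph.Walk.length_reverse, hp]
        simp only [Set.mem_setOf_eq] at hu; omega
      rw [SimpleGraph.Walk.not_nil_iff] at hnotnil
      obtain ⟨w, hadj, q, hq⟩ := hnotnil
      have hqlen : q.length = n := by
        have h1 : p.reverse.length = n + 1 := by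
          rw [SimpleGraph.Walk.length_reverse, hp]
          simpa using hu
        rw [hq, SimpleGraph.Walk.length_cons] at h1
        omega
      have hwB : w ∈ B n := by
        rw [hmemB]
        calc G.dist v w = G.dist w v := SimpleGraph.dist_comm
          _ ≤ q.length := SimpleGraph.dist_le q
          _ = n := hqlen
      rw [Finset.mem_biUnion]
      exact ⟨w, hwB, by rw [SimpleGraph.mem_neighborFinset]; exact hadj.symm⟩
    calc s (n + 1) = (hfin (n + 1)).toFinset.card := by
          rw [hscard, Set.ncard_eq_toFinset_card _ (hfin (n + 1))]
      _ ≤ ((B n).biUnion (fun w => G.neighborFinset w)).card :=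
          Finset.card_le_card hsubB
      _ ≤ ∑ w ∈ B n, (G.neighborFinset w).card := Finset.card_biUnion_le
      _ ≤ ∑ w ∈ B n, D := Finset.sum_le_sum (fun w _ => hdeg w)
      _ = D * (B n).card := by rw [Finset.sum_const, smul_eq_mul, mul_comm]
  have hbexp : ∀ n, (B n).card ≤ (D + 1) ^ n := by
    intro n
    induction n with
    | zero => simp [hb0]
    | succ n ih =>
      calc (B (n + 1)).card = (B n).card + s (n + 1) := hbsucc n
        _ ≤ (B n).card + D * (B n).card := by have := hup n; omega
        _ = (D + 1) * (B n).card := by ring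
        _ ≤ (D + 1) * (D + 1) ^ n := by
            exact Nat.mul_le_mul_left _ ih
        _ = (D + 1) ^ (n + 1) := by ring
  have hsexp : ∀ n, s n ≤ (D + 1) ^ n := fun n => le_trans (hsub_ball n) (hbexp n)
  -- the sequences
  set f : ℕ → ℝ := fun n => Real.log (s n : ℝ) / n with hf
  set L : ℝ := Real.log (1 + h0) with hL
  set g : ℕ → ℝ := fun n => L - Real.log ((n : ℝ) + 1) / n with hg
  -- f is bounded above
  have hfbdd : IsBoundedUnder (· ≤ ·) atTop f := by
    refine isBoundedUnder_of ⟨Real.log ((D : ℝ) + 1), fun n => ?_⟩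
    rcases Nat.eq_zero_or_pos n with hn | hn
    · subst hn
      simp only [hf, Nat.cast_zero, div_zero]
      exact Real.log_nonneg (by linarith [Nat.cast_nonneg (α := ℝ) D])
    · have h1 : (s n : ℝ) ≤ ((D : ℝ) + 1) ^ n := by
        have := hsexp n
        calc (s n : ℝ) ≤ ((D + 1 : ℕ) ^ n : ℕ) := by exact_mod_cast this
          _ = ((D : ℝ) + 1) ^ n := by push_cast; ring
      have h2 : Real.log (s n : ℝ) ≤ n * Real.log ((D : ℝ) + 1) := by
        calc Real.log (s n : ℝ) ≤ Real.log (((D : ℝ) + 1) ^ n) := by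
              apply Real.log_le_log (by exact_mod_cast hs1 n) h1
          _ = n * Real.log ((D : ℝ) + 1) := Real.log_pow _ n
      rw [hf, div_le_iff₀ (by exact_mod_cast hn : (0:ℝ) < n)]
      linarith [h2]
  -- g ≤ f eventually
  have hgf : g ≤ᶠ[atTop] f := by
    filter_upwards [eventually_ge_atTop 1] with n hn
    have hnpos : (0:ℝ) < n := by exact_mod_cast hn
    have h1 : ((1 + h0) ^ n : ℝ) ≤ ((n : ℝ) + 1) * (s n : ℝ) := by
      calc ((1 + h0) ^ n : ℝ) ≤ ((B n).card : ℝ) := hgeom n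
        _ ≤ ((n : ℝ) + 1) * (s n : ℝ) := by exact_mod_cast hb_le n
    have hlog : (n : ℝ) * L ≤ Real.log ((n : ℝ) + 1) + Real.log (s n : ℝ) := by
      have hpos : (0:ℝ) < (1 + h0) ^ n := by positivity
      calc (n : ℝ) * L = Real.log ((1 + h0) ^ n) := (Real.log_pow _ n).symm
        _ ≤ Real.log (((n : ℝ) + 1) * (s n : ℝ)) := Real.log_le_log hpos h1
        _ = Real.log ((n : ℝ) + 1) + Real.log (s n : ℝ) := by
            rw [Real.log_mul (by positivity) (Nat.cast_pos.mpr (hs1 n)).ne']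
    rw [hg, hf]
    rw [sub_le_iff_le_add, ← add_div, le_div_iff₀ hnpos]
    linarith [hlog]
  -- g is cobounded below
  have hgcob : IsCoboundedUnder (· ≤ ·) atTop g := by
    apply isCoboundedUnder_le_of_le atTop (x := L - 1)
    intro n
    rcases Nat.eq_zero_or_pos n with hn | hn
    · subst hn; simp [hg]
    · have hnpos : (0:ℝ) < n := by exact_mod_cast hn
      have : Real.log ((n : ℝ) + 1) / n ≤ 1 := by
        rw [div_le_one hnpos]
        have := Real.log_le_sub_one_of_pos (x := (n:ℝ) + 1) (by positivity)
        linarith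
      simp only [hg]
      linarith
  -- g tends to L
  have hgtend : Tendsto g atTop (nhds L) := by
    have h2 : Tendsto (fun n : ℕ => Real.log ((n : ℝ) + 1) / ((n : ℝ) + 1)) atTop (nhds 0) := by
      have hcomp : Tendsto (fun n : ℕ => (n : ℝ) + 1) atTop atTop :=
        tendsto_atTop_add_const_right atTop 1 tendsto_natCast_atTop_atTop
      exact (Real.isLittleO_log_id_atTop.tendsto_div_nhds_zero).comp hcomp
    have h3 : Tendsto (fun n : ℕ => ((n : ℝ) + 1) / (n : ℝ)) atTop (nhds 1) := by
      have h4 : Tendsto (fun n : ℕ => 1 + 1 / (n : ℝ)) atTop (nhds 1) := by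
        have := tendsto_one_div_atTop_nhds_zero_nat (𝕜 := ℝ)
        simpa using tendsto_const_nhds.add this
      apply h4.congr'
      filter_upwards [eventually_ge_atTop 1] with n hn
      have hne : (n : ℝ) ≠ 0 := by positivity
      field_simp
    have h5 : Tendsto (fun n : ℕ => Real.log ((n : ℝ) + 1) / (n : ℝ)) atTop (nhds 0) := by
      have := h3.mul h2
      rw [one_mul] at this
      apply this.congr'
      filter_upwards [eventually_ge_atTop 1] with n hn
      have hne : (n : ℝ) ≠ 0 := by positivity
      field_simp
    have h6 : Tendsto (fun n : ℕ => L - Real.log ((n : ℝ) + 1) / (n : ℝ)) atTop (nhds (L - 0)) :=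
      Tendsto.sub tendsto_const_nhds h5
    rw [sub_zero] at h6
    exact h6
  have hglimsup : limsup g atTop = L := hgtend.limsup_eq
  have hmain : L ≤ limsup f atTop := by
    rw [← hglimsup]
    exact limsup_le_limsup hgf hgcob hfbdd
  have hpos : (0:ℝ) < 1 + h0 := by linarith
  calc Real.exp (limsup f atTop) ≥ Real.exp L := Real.exp_le_exp.mpr hmain
    _ = 1 + h0 := by rw [hL, Real.exp_log hpos]
end
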